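/- arXiv:2307.00073 — 7 statements merged into one kernel-verified Lean document; each statement's English description precedes it below -/
import Mathlib

section
/- Let A be a commutative ring and f₁, …, fₙ elements of A generating the unit ideal. Suppose that for each i we are given a finitely generated ideal Iᵢ ⊆ A_{fᵢ} of the localization of A at fᵢ, such that for all i, j the extensions of Iᵢ and Iⱼ to A_{fᵢfⱼ} agree. Then there exists a finitely generated ideal I ⊆ A such that for each i the extension of I to A_{fᵢ} equals Iᵢ. -/
/-!
Each `Iᵢ` is spanned by the images of finitely many `c ∈ A`. For such a `c`, the compatibility
condition puts `c` into the extension of `Iⱼ` to `A_{fᵢfⱼ}`, so `fᵢᵐ c` maps into `Iⱼ` for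
some `m`; one exponent `M` serves all `j` and all generators. The ideal `J` spanned by these
`fᵢᴹ c` then maps into every `Iⱼ`, and its extension to `A_{fⱼ}` contains the generators of `Iⱼ`,
since `fⱼᴹ` becomes a unit there.
-/

/-- The canonical map `A_a → A_b` when `a ∣ b`. -/
noncomputable def locRingMap {A : Type*} [CommRing A] (a b : A) (h : a ∣ b) :
    Localization.Away a →+* Localization.Away b :=
  Localization.awayLift (algebraMap A (Localization.Away b)) a
    (IsLocalization.Away.isUnit_of_dvd b h)

open Filter

theorem IsLocalization.Away.algebraMap_pow_mul_mem_iff {R S : Type*} [CommSemiring R]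
    [CommSemiring S] [Algebra R S] (a : R) [IsLocalization.Away a S] (I : Ideal S) (m : ℕ)
    (x : R) : algebraMap R S (a ^ m * x) ∈ I ↔ algebraMap R S x ∈ I := by
  rw [map_mul, map_pow]
  exact Ideal.unit_mul_mem_iff_mem I ((algebraMap_isUnit a).pow m)

theorem IsLocalization.exists_finset_span_image_eq {R S : Type*} [CommSemiring R] [CommSemiring S]
    [Algebra R S] (M : Submonoid R) [IsLocalization M S] {I : Ideal S} (hI : I.FG) :
    ∃ s : Finset R, I = Ideal.span (algebraMap R S '' s) := by
  classical
  rw [← IsLocalization.map_under M S I, Ideal.map] at hI ⊢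
  obtain ⟨t, hts, ht⟩ := (Submodule.fg_span_iff_fg_span_finset_subset _).1 hI
  obtain ⟨s, -, rfl⟩ := Finset.subset_set_image_iff.1 hts
  rw [Finset.coe_image] at ht
  exact ⟨s, ht⟩

section

variable {A : Type*} [CommRing A]

theorem locRingMap_comp_algebraMap (a b : A) (h : a ∣ b) :
    (locRingMap a b h).comp (algebraMap A (Localization.Away a)) =
      algebraMap A (Localization.Away b) :=
  IsLocalization.lift_comp _

theorem map_locRingMap_map_algebraMap (a b : A) (h : a ∣ b) (K : Ideal A) :
    (K.map (algebraMap A (Localization.Away a))).map (locRingMap a b h) =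
      K.map (algebraMap A (Localization.Away b)) := by
  rw [Ideal.map_map, locRingMap_comp_algebraMap]

theorem exists_algebraMap_pow_mul_mem_of_mem_map_locRingMap (a b : A)
    (I : Ideal (Localization.Away b)) {x : A}
    (hx : algebraMap A (Localization.Away (a * b)) x ∈
      I.map (locRingMap b (a * b) (dvd_mul_left b a))) :
    ∃ m : ℕ, algebraMap A (Localization.Away b) (a ^ m * x) ∈ I := by
  rw [← IsLocalization.map_under (.powers b) _ I, map_locRingMap_map_algebraMap,
    IsLocalization.algebraMap_mem_map_algebraMap_iff (.powers (a * b))] at hx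
  obtain ⟨_, ⟨m, rfl⟩, hm⟩ := hx
  refine ⟨m, (IsLocalization.Away.algebraMap_pow_mul_mem_iff b I m _).1 ?_⟩
  rwa [← mul_assoc, ← mul_pow, mul_comm b a]

theorem eventually_forall_algebraMap_pow_mul_mem {ι : Type*} [Finite ι] {f : ι → A}
    {I : ∀ i, Ideal (Localization.Away (f i))}
    (hcomp : ∀ i j,
      (I i).map (locRingMap (f i) (f i * f j) (dvd_mul_right _ _)) =
      (I j).map (locRingMap (f j) (f i * f j) (dvd_mul_left _ _)))
    {i : ι} {c : A} (hc : algebraMap A (Localization.Away (f i)) c ∈ I i) :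
    ∀ᶠ m in atTop, ∀ j, algebraMap A (Localization.Away (f j)) (f i ^ m * c) ∈ I j := by
  refine eventually_all.2 fun j => ?_
  have hij : algebraMap A (Localization.Away (f i * f j)) c ∈
      (I j).map (locRingMap (f j) (f i * f j) (dvd_mul_left _ _)) := by
    rw [← hcomp, ← locRingMap_comp_algebraMap (f i) (f i * f j) (dvd_mul_right _ _)]
    exact Ideal.mem_map_of_mem _ hc
  obtain ⟨m, hm⟩ := exists_algebraMap_pow_mul_mem_of_mem_map_locRingMap (f i) (f j) (I j) hij
  refine eventually_atTop.2 ⟨m, fun k hk => ?_⟩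
  rw [← pow_mul_pow_sub (f i) hk, mul_right_comm, map_mul]
  exact Ideal.mul_mem_right _ _ hm

end

theorem glue_fg_ideals_general {A : Type*} [CommRing A] {n : ℕ} (f : Fin n → A)
    (I : ∀ i, Ideal (Localization.Away (f i)))
    (hIfg : ∀ i, (I i).FG)
    (hcomp : ∀ i j,
      (I i).map (locRingMap (f i) (f i * f j) (dvd_mul_right _ _)) =
      (I j).map (locRingMap (f j) (f i * f j) (dvd_mul_left _ _))) :
    ∃ J : Ideal A, J.FG ∧
      ∀ i, J.map (algebraMap A (Localization.Away (f i))) = I i := by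
  choose s hs using fun i => IsLocalization.exists_finset_span_image_eq (.powers (f i)) (hIfg i)
  have hmem : ∀ i, ∀ c ∈ s i, algebraMap A (Localization.Away (f i)) c ∈ I i :=
    fun i c hc => hs i ▸ Ideal.subset_span (Set.mem_image_of_mem _ hc)
  obtain ⟨M, hM⟩ := (eventually_all.2 fun i => (eventually_all_finset (s i)).2 fun c hc =>
    eventually_forall_algebraMap_pow_mul_mem hcomp (hmem i c hc)).exists
  refine ⟨Ideal.span (⋃ i, (f i ^ M * ·) '' s i),
    Submodule.fg_span (Set.finite_iUnion fun i => (s i).finite_toSet.image _),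
    fun j => le_antisymm ?_ ?_⟩
  · rw [Ideal.map_span, Ideal.span_le]
    rintro _ ⟨_, hx, rfl⟩
    obtain ⟨i, c, hc, rfl⟩ := Set.mem_iUnion.1 hx
    exact hM i c hc j
  · rw [hs j, Ideal.span_le]
    rintro _ ⟨c, hc, rfl⟩
    rw [SetLike.mem_coe, ← IsLocalization.Away.algebraMap_pow_mul_mem_iff (f j) _ M]
    exact Ideal.mem_map_of_mem _ (Ideal.subset_span (Set.mem_iUnion.2 ⟨j, c, hc, rfl⟩))

theorem glue_fg_ideals {A : Type*} [CommRing A] {n : ℕ} (f : Fin n → A)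
    (hf : Ideal.span (Set.range f) = ⊤)
    (I : ∀ i, Ideal (Localization.Away (f i)))
    (hIfg : ∀ i, (I i).FG)
    (hcomp : ∀ i j,
      (I i).map (locRingMap (f i) (f i * f j) (dvd_mul_right _ _)) =
      (I j).map (locRingMap (f j) (f i * f j) (dvd_mul_left _ _))) :
    ∃ J : Ideal A, J.FG ∧
      ∀ i, J.map (algebraMap A (Localization.Away (f i))) = I i :=
  glue_fg_ideals_general f I hIfg hcomp
end

section
/- Let M be a module over a commutative ring A, and let f₁, …, f_l : A generate the unit ideal. Suppose given for each pair i, j an element s_{ij} of the localization M_{fᵢfⱼ} such that for all i, j, k the cocycle condition s_{jk} − s_{ik} + s_{ij} = 0 holds in M_{fᵢfⱼf_k}. Then there exist elements uᵢ : M_{fᵢ} for each i such that s_{ij} = uⱼ − uᵢ in M_{fᵢfⱼ} for all i, j. -/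
/-- The canonical map `M_a → M_b` on localized modules when `a ∣ b`. -/
noncomputable def locModMap {R : Type*} [CommRing R] {M : Type*} [AddCommGroup M]
    [Module R M] (a b : R) (h : a ∣ b) :
    LocalizedModule (Submonoid.powers a) M →ₗ[R]
      LocalizedModule (Submonoid.powers b) M :=
  LocalizedModule.lift _ (LocalizedModule.mkLinearMap (Submonoid.powers b) M)
    (by
      rintro ⟨x, n, rfl⟩
      obtain ⟨c, rfl⟩ := h
      have hu := IsLocalizedModule.map_units
        (LocalizedModule.mkLinearMap (Submonoid.powers (a * c)) M)
        (⟨(a * c) ^ n, ⟨n, rfl⟩⟩ : Submonoid.powers (a * c))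
      simp only [mul_pow, map_mul] at hu
      exact (((Commute.all (a ^ n) (c ^ n)).map
        (algebraMap R (Module.End R (LocalizedModule (Submonoid.powers (a * c)) M)))).isUnit_mul_iff.mp hu).1)

/-!
Clear denominators: write every `s i j` as `m i j / (f i * f j) ^ n` with a single `n`; the
cocycle identity then holds in `M` after multiplying by `(f i * f j * f k) ^ N` for a single `N`.
With `g i = f i ^ (n + N)` and `m' i j = (f i * f j) ^ N • m i j` it becomes the exact identity
`g i • m' j k - g j • m' i k + g k • m' i j = 0`, and since the `g i` still generate the unit
ideal, a partition of unity `∑ c k * g k = 1` yields the primitive `u i = -∑ k, c k • m' i k`.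
-/

open Filter LocalizedModule

section

variable {R : Type*} [CommRing R] {M : Type*} [AddCommGroup M] [Module R M]

theorem LocalizedModule.mk_add_mk_same {S : Submonoid R} (x y : M) (t : S) :
    mk x t + mk y t = mk (x + y) t := by
  rw [mk_add_mk, ← smul_add, mk_cancel_common_left]

theorem LocalizedModule.mk_sub_mk_same {S : Submonoid R} (x y : M) (t : S) :
    mk x t - mk y t = mk (x - y) t := by
  rw [sub_eq_add_neg, ← mk_neg, mk_add_mk_same, ← sub_eq_add_neg]

theorem LocalizedModule.mk_pow_smul_pow_add (a : R) (m : M) (n k : ℕ) :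
    mk (a ^ k • m) (Submonoid.pow a (n + k)) = mk m (Submonoid.pow a n) := by
  have hpow : Submonoid.pow a (n + k) = Submonoid.pow a k * Submonoid.pow a n :=
    Subtype.ext ((pow_add a n k).trans (mul_comm _ _))
  rw [hpow, ← mk_cancel_common_left (Submonoid.pow a k) (Submonoid.pow a n) m]
  rfl

theorem LocalizedModule.eventually_exists_eq_mk_pow (a : R)
    (x : LocalizedModule (Submonoid.powers a) M) :
    ∀ᶠ n in atTop, ∃ m : M, x = mk m (Submonoid.pow a n) := by
  induction x using induction_on with
  | h m t =>
    obtain ⟨p, hp⟩ := t.2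
    filter_upwards [eventually_ge_atTop p] with n hn
    obtain ⟨k, rfl⟩ := Nat.exists_eq_add_of_le hn
    refine ⟨a ^ k • m, ?_⟩
    rw [mk_pow_smul_pow_add, Submonoid.pow_apply]
    exact congrArg _ (Subtype.ext hp.symm)

theorem LocalizedModule.eventually_pow_smul_eq_zero_of_mk_eq_zero {a : R} {m : M}
    {t : Submonoid.powers a} (h : mk m t = 0) : ∀ᶠ q in atTop, a ^ q • m = 0 := by
  rw [← zero_mk 1, mk_eq] at h
  obtain ⟨⟨_, p, rfl⟩, hp⟩ := h
  simp only [one_smul, smul_zero, Submonoid.smul_def] at hp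
  filter_upwards [eventually_ge_atTop p] with q hq
  obtain ⟨k, rfl⟩ := Nat.exists_eq_add_of_le hq
  rw [pow_add, mul_smul, smul_comm, hp, smul_zero]

theorem locModMap_mk {a b c : R} (h : a ∣ b) (hc : b = a * c) (m : M) (p : ℕ) :
    locModMap a b h (mk m (Submonoid.pow a p)) = mk (c ^ p • m) (Submonoid.pow b p) := by
  unfold locModMap
  rw [lift_mk, Module.End.algebraMap_isUnit_inv_apply_eq_iff, mkLinearMap_apply, smul'_mk,
    mk_eq]
  exact ⟨1, by
    simp only [Submonoid.pow_apply, one_smul, Submonoid.mk_smul, smul_smul, hc, mul_pow]⟩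

theorem exists_sum_mul_pow_eq_one {ι : Type*} [Fintype ι] {f : ι → R}
    (hf : Ideal.span (Set.range f) = ⊤) (n : ℕ) : ∃ c : ι → R, ∑ k, c k * f k ^ n = 1 := by
  have h := Ideal.span_pow_eq_top _ hf n
  rw [← Set.range_comp] at h
  exact Ideal.mem_span_range_iff_exists_fun.mp (h ▸ Submodule.mem_top)

theorem exists_eq_smul_sub_smul_of_cocycle {ι : Type*} [Fintype ι] {g c : ι → R}
    (hc : ∑ k, c k * g k = 1) {m : ι → ι → M}
    (hm : ∀ i j k, g i • m j k - g j • m i k + g k • m i j = 0) :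
    ∃ u : ι → M, ∀ i j, m i j = g i • u j - g j • u i := by
  refine ⟨fun i => -∑ k, c k • m i k, fun i j => ?_⟩
  calc m i j = ∑ k, c k • (g k • m i j) := by
        simp_rw [smul_smul, ← Finset.sum_smul, hc, one_smul]
    _ = ∑ k, c k • (g j • m i k - g i • m j k) := by
        refine Finset.sum_congr rfl fun k _ => congrArg _ ?_
        linear_combination (norm := module) hm i j k
    _ = _ := by
        simp only [smul_neg, Finset.smul_sum, smul_sub, Finset.sum_sub_distrib,
          smul_comm (g _) (c _)]
        abel

end

theorem cech_degree_one_exact {R : Type*} [CommRing R] {M : Type*} [AddCommGroup M]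
    [Module R M] {l : ℕ} (f : Fin l → R) (hf : Ideal.span (Set.range f) = ⊤)
    (s : ∀ i j : Fin l, LocalizedModule (Submonoid.powers (f i * f j)) M)
    (hcoc : ∀ i j k : Fin l,
      locModMap (f j * f k) (f i * f j * f k) ⟨f i, by ring⟩ (s j k)
      - locModMap (f i * f k) (f i * f j * f k) ⟨f j, by ring⟩ (s i k)
      + locModMap (f i * f j) (f i * f j * f k) ⟨f k, by ring⟩ (s i j) = 0) :
    ∃ u : ∀ i : Fin l, LocalizedModule (Submonoid.powers (f i)) M,
      ∀ i j : Fin l,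
        s i j = locModMap (f j) (f i * f j) ⟨f i, by ring⟩ (u j)
          - locModMap (f i) (f i * f j) ⟨f j, by ring⟩ (u i) := by
  obtain ⟨n, m, hs⟩ : ∃ (n : ℕ) (m : Fin l → Fin l → M),
      ∀ i j, s i j = mk (m i j) (Submonoid.pow (f i * f j) n) := by
    obtain ⟨n, hn⟩ := (eventually_all.2 fun ij : Fin l × Fin l =>
      eventually_exists_eq_mk_pow _ (s ij.1 ij.2)).exists
    choose m hm using hn
    exact ⟨n, fun i j => m (i, j), fun i j => hm (i, j)⟩
  obtain ⟨N, hN⟩ : ∃ N : ℕ, ∀ i j k, (f i * f j * f k) ^ N •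
      (f i ^ n • m j k - f j ^ n • m i k + f k ^ n • m i j) = 0 := by
    have hq : ∀ i j k, ∀ᶠ q in atTop, (f i * f j * f k) ^ q •
        (f i ^ n • m j k - f j ^ n • m i k + f k ^ n • m i j) = 0 := fun i j k =>
      eventually_pow_smul_eq_zero_of_mk_eq_zero (t := Submonoid.pow _ n) <| by
        rw [← mk_add_mk_same, ← mk_sub_mk_same, ← hcoc i j k, hs, hs, hs,
          locModMap_mk _ (c := f i) (by ring), locModMap_mk _ (c := f j) (by ring),
          locModMap_mk _ (c := f k) (by ring)]
    obtain ⟨N, hN⟩ := (eventually_all.2 fun ijk : Fin l × Fin l × Fin l =>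
      hq ijk.1 ijk.2.1 ijk.2.2).exists
    exact ⟨N, fun i j k => hN (i, j, k)⟩
  obtain ⟨c, hc⟩ := exists_sum_mul_pow_eq_one hf (n + N)
  obtain ⟨u, hu⟩ := exists_eq_smul_sub_smul_of_cocycle hc
    (m := fun i j => (f i * f j) ^ N • m i j) fun i j k => by
      linear_combination (norm := module) hN i j k
  refine ⟨fun i => mk (u i) (Submonoid.pow (f i) (n + N)), fun i j => ?_⟩
  rw [hs, locModMap_mk _ (c := f i) (by ring), locModMap_mk _ (c := f j) (by ring),
    mk_sub_mk_same, ← hu, mk_pow_smul_pow_add]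
end

section
/- Let R be a local commutative ring and a, b ∈ R^{n+1} two vectors, each having at least one invertible entry, such that a is not a unit multiple of b. Then for every pair (x, y) ∈ R² with at least one of x, y invertible, the vector x·a + y·b is nonzero (has some nonzero entry). -/
theorem exists_units_smul_eq_of_smul_add_smul_eq_zero {R ι : Type*} [CommRing R]
    {a b : ι → R} {x y : R} (hx : IsUnit x) (ha : ∃ i, IsUnit (a i))
    (h : x • a + y • b = 0) : ∃ μ : Rˣ, μ • b = a := by
  obtain ⟨u, rfl⟩ := hx
  have ha_eq : a = (-(↑u⁻¹ * y)) • b := by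
    funext i
    have hi : ↑u * a i + y * b i = 0 := congrFun h i
    simp only [Pi.smul_apply, smul_eq_mul]
    linear_combination ↑u⁻¹ * hi - a i * u.inv_mul
  obtain ⟨j, hj⟩ := ha
  have hμ : IsUnit (-(↑u⁻¹ * y)) := by
    rw [ha_eq, Pi.smul_apply, smul_eq_mul] at hj
    exact isUnit_of_mul_isUnit_left hj
  exact ⟨hμ.unit, by rw [Units.smul_def, hμ.unit_spec, ha_eq]⟩

theorem line_through_two_points_general {R : Type*} [CommRing R] {n : ℕ}
    (a b : Fin (n + 1) → R)
    (ha : ∃ i, IsUnit (a i)) (hb : ∃ i, IsUnit (b i))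
    (hab : ¬ ∃ lam : Rˣ, (fun i => (lam : R) * b i) = a) :
    ∀ x y : R, (IsUnit x ∨ IsUnit y) → ∃ i, x * a i + y * b i ≠ 0 := by
  intro x y hxy
  by_contra! h
  have hzero : x • a + y • b = 0 := funext h
  apply hab
  rcases hxy with hx | hy
  · obtain ⟨μ, hμ⟩ := exists_units_smul_eq_of_smul_add_smul_eq_zero hx ha hzero
    exact ⟨μ, hμ⟩
  · obtain ⟨μ, hμ⟩ :=
      exists_units_smul_eq_of_smul_add_smul_eq_zero hy hb ((add_comm _ _).trans hzero)
    exact ⟨μ⁻¹, show μ⁻¹ • b = a by rw [← hμ, inv_smul_smul]⟩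

theorem line_through_two_points {R : Type*} [CommRing R] [IsLocalRing R] {n : ℕ}
    (a b : Fin (n + 1) → R)
    (ha : ∃ i, IsUnit (a i)) (hb : ∃ i, IsUnit (b i))
    (hab : ¬ ∃ lam : Rˣ, (fun i => (lam : R) * b i) = a) :
    ∀ x y : R, (IsUnit x ∨ IsUnit y) → ∃ i, x * a i + y * b i ≠ 0 :=
  line_through_two_points_general a b ha hb hab
end

section
/- Let R be a local commutative ring and x, y ∈ R^{n+1} vectors each containing at least one invertible entry. Then there exists a unit λ : R with λ·x = y if and only if xᵢ·yⱼ = yᵢ·xⱼ for all i ≠ j. -/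
/-!
If `x i₀` is a unit, the minors through `i₀` say `y = (y i₀ / x i₀) • x`, and the minor
`x i₀ * y j₀ = y i₀ * x j₀` with `y j₀` a unit forces `y i₀` to be a unit as well.
-/

section

variable {R ι : Type*} [CommRing R] {x y : ι → R}

theorem mul_eq_mul_of_units_mul_eq {lam : Rˣ} (h : ∀ i, (lam : R) * x i = y i) (i j : ι) :
    x i * y j = y i * x j := by
  rw [← h i, ← h j]
  ring

theorem exists_units_mul_eq_of_mul_eq_mul {i₀ : ι} (hx : IsUnit (x i₀)) (hy : IsUnit (y i₀))
    (h : ∀ i, x i₀ * y i = y i₀ * x i) : ∃ lam : Rˣ, ∀ i, (lam : R) * x i = y i := by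
  refine ⟨hy.unit * hx.unit⁻¹, fun i => hx.mul_left_cancel ?_⟩
  rw [h i, Units.val_mul, hy.unit_spec]
  linear_combination (y i₀ * x i) * hx.mul_val_inv

theorem exists_units_mul_eq_iff_mul_eq_mul (hx : ∃ i, IsUnit (x i)) (hy : ∃ i, IsUnit (y i)) :
    (∃ lam : Rˣ, ∀ i, (lam : R) * x i = y i) ↔ ∀ i j, x i * y j = y i * x j := by
  refine ⟨fun ⟨_, h⟩ => mul_eq_mul_of_units_mul_eq h, fun h => ?_⟩
  obtain ⟨i₀, hxi₀⟩ := hx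
  obtain ⟨j₀, hyj₀⟩ := hy
  have hyi₀ : IsUnit (y i₀) := isUnit_of_mul_isUnit_left (h i₀ j₀ ▸ hxi₀.mul hyj₀)
  exact exists_units_mul_eq_of_mul_eq_mul hxi₀ hyi₀ (h i₀)

end

theorem proj_equality_minors_general {R : Type*} [CommRing R] {n : ℕ}
    (x y : Fin (n + 1) → R)
    (hx : ∃ i, IsUnit (x i)) (hy : ∃ i, IsUnit (y i)) :
    (∃ lam : Rˣ, ∀ i, (lam : R) * x i = y i) ↔
      ∀ i j, i ≠ j → x i * y j = y i * x j := by
  rw [exists_units_mul_eq_iff_mul_eq_mul hx hy]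
  refine ⟨fun h i j _ => h i j, fun h i j => ?_⟩
  obtain rfl | hij := eq_or_ne i j
  · exact mul_comm _ _
  · exact h i j hij

theorem proj_equality_minors {R : Type*} [CommRing R] [IsLocalRing R] {n : ℕ}
    (x y : Fin (n + 1) → R)
    (hx : ∃ i, IsUnit (x i)) (hy : ∃ i, IsUnit (y i)) :
    (∃ lam : Rˣ, ∀ i, (lam : R) * x i = y i) ↔
      ∀ i j, i ≠ j → x i * y j = y i * x j :=
  proj_equality_minors_general x y hx hy
end

section
/- Let R be a commutative ring and f : R. The localization (Π_{n:ℕ} R/(fⁿ))_f of the countable product module M = Π_{n:ℕ} R/(fⁿ) at f is zero if and only if there exists k : ℕ with f^k ∈ (f^{k+1}). -/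
/-!
If `f ^ k ∈ (f ^ (k + 1))`, then the chain `(f ^ k) ≤ (f ^ (k + 1)) ≤ (f ^ (k + 2)) ≤ ⋯` shows
`f ^ k ∈ (f ^ n)` for every `n`, so `f ^ k` kills all of `Π n, R ⧸ (f ^ n)`. Conversely, if the
localization vanishes then some `f ^ k` kills the element `(1)ₙ`, and its coordinate `k + 1` says
`f ^ k ∈ (f ^ (k + 1))`.
-/

theorem Ideal.pow_le_pow_add_of_le_pow_succ {R : Type*} [CommSemiring R] {I : Ideal R} {k : ℕ}
    (h : I ^ k ≤ I ^ (k + 1)) (j : ℕ) : I ^ k ≤ I ^ (k + j) := by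
  induction j with
  | zero => rfl
  | succ j ih =>
    calc I ^ k ≤ I ^ (k + j) := ih
      _ = I ^ j * I ^ k := by rw [pow_add, mul_comm]
      _ ≤ I ^ j * I ^ (k + 1) := Ideal.mul_mono_right h
      _ = I ^ (k + (j + 1)) := by rw [← pow_add]; ring_nf

theorem pow_mem_span_pow_of_mem_span_pow_succ {R : Type*} [CommSemiring R] {f : R} {k : ℕ}
    (h : f ^ k ∈ Ideal.span {f ^ (k + 1)}) (n : ℕ) : f ^ k ∈ Ideal.span {f ^ n} := by
  have hle : Ideal.span {f} ^ k ≤ Ideal.span {f} ^ (k + 1) := by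
    rwa [Ideal.span_singleton_pow, Ideal.span_singleton_pow, Ideal.span_singleton_le_iff_mem]
  have hmem : f ^ k ∈ Ideal.span {f} ^ (k + n) :=
    Ideal.pow_le_pow_add_of_le_pow_succ hle n <|
      Ideal.pow_mem_pow (Ideal.mem_span_singleton_self f) k
  rw [← Ideal.span_singleton_pow]
  exact Ideal.pow_le_pow_right (Nat.le_add_left n k) hmem

theorem Ideal.Quotient.smul_one_eq_zero_iff {R : Type*} [CommRing R] {I : Ideal R} {r : R} :
    r • (1 : R ⧸ I) = 0 ↔ r ∈ I := by
  rw [Algebra.smul_def, mul_one, Ideal.Quotient.algebraMap_eq, Ideal.Quotient.eq_zero_iff_mem]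

theorem localization_of_product_zero_iff {R : Type*} [CommRing R] (f : R) :
    Subsingleton
      (LocalizedModule (Submonoid.powers f) (∀ n : ℕ, R ⧸ Ideal.span {f ^ n})) ↔
      ∃ k : ℕ, f ^ k ∈ Ideal.span {f ^ (k + 1)} := by
  rw [LocalizedModule.subsingleton_iff]
  constructor
  · intro h
    obtain ⟨_, ⟨k, rfl⟩, hk⟩ := h 1
    exact ⟨k, Ideal.Quotient.smul_one_eq_zero_iff.mp (congrFun hk (k + 1))⟩
  · rintro ⟨k, hk⟩ m
    refine ⟨f ^ k, ⟨k, rfl⟩, funext fun n => ?_⟩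
    have hann : f ^ k ∈ Module.annihilator R (R ⧸ Ideal.span {f ^ n}) := by
      rw [Ideal.annihilator_quotient]
      exact pow_mem_span_pow_of_mem_span_pow_succ hk n
    exact Module.mem_annihilator.mp hann (m n)
end

section
/- Let R be a commutative ring and consider the pullback (fiber product) of R-algebras R[X] ×_{R[X,Y]/(1−XY)} R[Y], where R[X] → R[X,Y]/(1−XY) sends X to X and R[Y] → R[X,Y]/(1−XY) sends Y to Y. This pullback is isomorphic to R (via the constant polynomials). -/
/-!
Under `X ↦ T`, `Y ↦ T⁻¹`, a pair `(p, q)` lies in the pullback iff `p(T) = q(T⁻¹)` in `R[T;T⁻¹]`.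
The left side is supported in degrees `≥ 0` and the right side in degrees `≤ 0`, so both are the
constant `p(0) = q(0)`.
-/

open Polynomial LaurentPolynomial

namespace Polynomial

section Semiring

variable {R : Type*} [Semiring R]

lemma coeff_toLaurent_natCast (p : R[X]) (n : ℕ) : (toLaurent p).coeff n = p.coeff n :=
  Finsupp.mapDomain_apply Nat.castEmbedding.injective p.toFinsupp.coeff n

lemma coeff_toLaurent_of_neg (p : R[X]) {n : ℤ} (hn : n < 0) : (toLaurent p).coeff n = 0 := by
  rw [coeff_toLaurent, Finsupp.mapDomain_of_notMem_range]
  rintro ⟨m, rfl⟩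
  exact (Int.natCast_nonneg m).not_gt hn

end Semiring

variable {R : Type*} [CommSemiring R]

lemma aeval_T_neg_one (q : R[X]) : aeval (T (-1) : R[T;T⁻¹]) q = invert (toLaurent q) := by
  have : aeval (T (-1) : R[T;T⁻¹]) = invert.toAlgHom.comp toLaurentAlg :=
    algHom_ext (by simp [toLaurentAlg])
  rw [this]
  rfl

lemma eq_C_coeff_zero_of_toLaurent_eq_invert {p q : R[X]}
    (h : toLaurent p = invert (toLaurent q)) : p = C (q.coeff 0) := by
  ext n
  rw [← coeff_toLaurent_natCast, h, invert_apply, coeff_C]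
  rcases n with _ | n
  · simpa using coeff_toLaurent_natCast q 0
  · simpa using coeff_toLaurent_of_neg q (by omega : -((n + 1 : ℕ) : ℤ) < 0)

lemma toLaurent_eq_invert_toLaurent_iff {p q : R[X]} :
    toLaurent p = invert (toLaurent q) ↔ ∃ r, p = C r ∧ q = C r := by
  constructor
  · intro h
    have hp := eq_C_coeff_zero_of_toLaurent_eq_invert h
    have hq : q = C (p.coeff 0) :=
      eq_C_coeff_zero_of_toLaurent_eq_invert (by rw [h, involutive_invert])
    exact ⟨q.coeff 0, hp, by rw [hq, hp, coeff_C_zero, coeff_C_zero]⟩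
  · rintro ⟨r, rfl, rfl⟩
    simp [toLaurent_C]

end Polynomial

theorem global_functions_P1 {R : Type*} [CommRing R] :
    ∃ e : R ≃+*
      (RingHom.eqLocus
        ((toLaurent : R[X] →+* R[T;T⁻¹]).comp (RingHom.fst R[X] R[X]))
        (((aeval (T (-1) : R[T;T⁻¹])).toRingHom : R[X] →+* R[T;T⁻¹]).comp
          (RingHom.snd R[X] R[X]))),
      ∀ r : R, ((e r : R[X] × R[X])) = (Polynomial.C r, Polynomial.C r) := by
  have mem_iff : ∀ x : R[X] × R[X], x ∈ RingHom.eqLocus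
      ((toLaurent : R[X] →+* R[T;T⁻¹]).comp (RingHom.fst R[X] R[X]))
      (((aeval (T (-1) : R[T;T⁻¹])).toRingHom : R[X] →+* R[T;T⁻¹]).comp
        (RingHom.snd R[X] R[X])) ↔ ∃ r, x = (Polynomial.C r, Polynomial.C r) := by
    rintro ⟨p, q⟩
    change toLaurent p = aeval (T (-1) : R[T;T⁻¹]) q ↔ _
    simp only [aeval_T_neg_one, toLaurent_eq_invert_toLaurent_iff, Prod.mk.injEq]
  let f := (RingHom.prod Polynomial.C Polynomial.C).codRestrict _ fun r => (mem_iff _).2 ⟨r, rfl⟩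
  have hf : Function.Bijective f := by
    refine ⟨RingHom.injective_codRestrict.2 fun a b h => Polynomial.C_injective (congrArg Prod.fst h), ?_⟩
    rintro ⟨x, hx⟩
    obtain ⟨r, rfl⟩ := (mem_iff x).1 hx
    exact ⟨r, rfl⟩
  exact ⟨RingEquiv.ofBijective f hf, fun r => rfl⟩
end

section
/- Let R be a local commutative ring. Then inequality on the set of equivalence classes of R^{n+1}∖{unimodular-zero} under unit scaling — i.e., on projective n-space ℙⁿ(R) defined as vectors with some invertible entry modulo unit multiples — is an apartness relation: (i) ¬(x ≠ x); (ii) x ≠ y implies y ≠ x; (iii) if x ≠ y then for every z, x ≠ z or z ≠ y. -/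
/-!
Irreflexivity and symmetry are identities between 2×2 minors. For cotransitivity, pick a unit
entry `c k`; then `c k` times an invertible minor of `(a, b)` expands into a sum of three
products, each containing a minor of `(a, c)` or `(c, b)`. In a local ring a sum of nonunits is
a nonunit, so one of these products, hence one of those minors, is a unit.
-/

/-- Apartness of projective points represented by vectors: some 2×2 minor is invertible. -/
def projApart {R : Type*} [CommRing R] {n : ℕ} (a b : Fin (n + 1) → R) : Prop :=
  ∃ i j, i ≠ j ∧ IsUnit (a i * b j - b i * a j)

namespace projApart

variable {R : Type*} [CommRing R] {n : ℕ} {a b : Fin (n + 1) → R}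

theorem of_isUnit [Nontrivial R] {i j : Fin (n + 1)} (h : IsUnit (a i * b j - b i * a j)) : projApart a b := by
  refine ⟨i, j, ?_, h⟩
  rintro rfl
  rw [mul_comm, sub_self] at h
  exact not_isUnit_zero h

theorem irrefl [Nontrivial R] (a : Fin (n + 1) → R) : ¬ projApart a a := by
  rintro ⟨i, j, -, h⟩
  rw [sub_self] at h
  exact not_isUnit_zero h

theorem symm (h : projApart a b) : projApart b a := by
  obtain ⟨i, j, hij, hu⟩ := h
  exact ⟨j, i, hij.symm, by rwa [mul_comm (b j), mul_comm (a j)]⟩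

theorem cotrans [IsLocalRing R] (h : projApart a b) (c : Fin (n + 1) → R)
    (hc : ∃ k, IsUnit (c k)) : projApart a c ∨ projApart c b := by
  obtain ⟨k, hk⟩ := hc
  obtain ⟨i, j, -, hu⟩ := h
  have expand : c k * (a i * b j - b i * a j) =
      (a i * c k - c i * a k) * b j + (a k * c j - c k * a j) * b i
        + a k * (c i * b j - b i * c j) := by ring
  have hsum := expand ▸ hk.mul hu
  rcases IsLocalRing.isUnit_or_isUnit_of_isUnit_add hsum with h | h
  · rcases IsLocalRing.isUnit_or_isUnit_of_isUnit_add h with h | h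
    · exact .inl (of_isUnit (isUnit_of_mul_isUnit_left h))
    · exact .inl (of_isUnit (isUnit_of_mul_isUnit_left h))
  · exact .inr (of_isUnit (isUnit_of_mul_isUnit_right h))

end projApart

theorem proj_apartness {R : Type*} [CommRing R] [IsLocalRing R] {n : ℕ} :
    (∀ a : Fin (n + 1) → R, (∃ i, IsUnit (a i)) → ¬ projApart a a) ∧
    (∀ a b : Fin (n + 1) → R, (∃ i, IsUnit (a i)) → (∃ i, IsUnit (b i)) →
      projApart a b → projApart b a) ∧
    (∀ a b c : Fin (n + 1) → R, (∃ i, IsUnit (a i)) → (∃ i, IsUnit (b i)) →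
      (∃ i, IsUnit (c i)) → projApart a b → projApart a c ∨ projApart c b) :=
  ⟨fun a _ => projApart.irrefl a,
   fun _ _ _ _ h => h.symm,
   fun _ _ c _ _ hc h => h.cotrans c hc⟩
end
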